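/- arXiv:1406.0893 — 2 statements merged into one kernel-verified Lean document; each statement's English description precedes it below -/
import Mathlib

section
/- With the grammar-encoding quad-system QS_c as above, for every word w = t₁…t_p ∈ (V ∪ T)* and every variable V_j, if V_j ⇒* w in the grammar and there exist constants b₁,…,b_{p+1} with c:(b_i, t_i, b_{i+1}) ∈ dChase(QS_c) for 1 ≤ i ≤ p, then c:(b₁, V_j, b_{p+1}) ∈ dChase(QS_c). -/
/-- Constants of the chase: the initial constant `a` and skolem blank nodes
`sk t x` created by the generating rule for terminal `t` applied to node `x`. -/
inductive Node (Sym : Type) where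
  | a : Node Sym
  | sk : Sym → Node Sym → Node Sym

/-- Quads of the single-context quad-system: `edge x l y` stands for c:(x,l,y) and
`typC x` stands for c:(x, rdf:type, C). -/
inductive Quad (Sym : Type) where
  | edge : Node Sym → Sym → Node Sym → Quad Sym
  | typC : Node Sym → Quad Sym

/-- `EdgePath S x w y`: there is a path of edges in `S` from `x` to `y` whose labels
spell the word `w`. -/
def EdgePath {Sym : Type} (S : Set (Quad Sym)) : Node Sym → List Sym → Node Sym → Prop
  | x, [], y => x = y
  | x, l :: ls, y => ∃ z, Quad.edge x l z ∈ S ∧ EdgePath S z ls y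

/-- `Closed T P S`: the set of quads `S` contains the initial quad c:(a,rdf:type,C)
and is closed under the skolemized terminal rules (for terminals in `T`) and the
production-encoding rules (for productions in `P`). -/
def Closed {Sym : Type} (T : Set Sym) (P : Set (Sym × List Sym)) (S : Set (Quad Sym)) : Prop :=
  Quad.typC Node.a ∈ S ∧
  (∀ t x, t ∈ T → Quad.typC x ∈ S →
    Quad.edge x t (Node.sk t x) ∈ S ∧ Quad.typC (Node.sk t x) ∈ S) ∧
  (∀ v w x y, (v, w) ∈ P → EdgePath S x w y → Quad.edge x v y ∈ S)

/-- The dChase: the least set of quads closed under all the rules. -/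
def dChase {Sym : Type} (T : Set Sym) (P : Set (Sym × List Sym)) : Set (Quad Sym) :=
  ⋂₀ {S | Closed T P S}

/-- One-step derivation of the grammar with productions `P`. -/
def GStep {Sym : Type} (P : Set (Sym × List Sym)) (u w : List Sym) : Prop :=
  ∃ x v y rhs, (v, rhs) ∈ P ∧ u = x ++ v :: y ∧ w = x ++ rhs ++ y

/-- Derivability `u ⇒* w` of the grammar with productions `P`. -/
def Derives {Sym : Type} (P : Set (Sym × List Sym)) : List Sym → List Sym → Prop :=
  Relation.ReflTransGen (GStep P)

lemma EdgePath.mono {Sym : Type} {S S' : Set (Quad Sym)} (h : S ⊆ S') :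
    ∀ {x w y}, EdgePath S x w y → EdgePath S' x w y := by
  intro x w
  induction w generalizing x with
  | nil => intro y hp; exact hp
  | cons l ls ih =>
    intro y hp
    obtain ⟨z, hz, hp⟩ := hp
    exact ⟨z, h hz, ih hp⟩

lemma EdgePath.append {Sym : Type} {S : Set (Quad Sym)} :
    ∀ {x u v y}, EdgePath S x (u ++ v) y ↔ ∃ z, EdgePath S x u z ∧ EdgePath S z v y := by
  intro x u
  induction u generalizing x with
  | nil =>
    intro v y
    constructor
    · intro h; exact ⟨x, rfl, h⟩
    · rintro ⟨z, rfl, h⟩; exact h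
  | cons l ls ih =>
    intro v y
    constructor
    · rintro ⟨z, hz, hp⟩
      obtain ⟨m, h1, h2⟩ := ih.mp hp
      exact ⟨m, ⟨z, hz, h1⟩, h2⟩
    · rintro ⟨m, ⟨z, hz, h1⟩, h2⟩
      exact ⟨z, hz, ih.mpr ⟨m, h1, h2⟩⟩

lemma dChase_closed {Sym : Type} (T : Set Sym) (P : Set (Sym × List Sym)) :
    Closed T P (dChase T P) := by
  refine ⟨?_, ?_, ?_⟩
  · intro S hS; exact hS.1
  · intro t x ht hx
    constructor
    · intro S hS
      exact (hS.2.1 t x ht (hx S hS)).1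
    · intro S hS
      exact (hS.2.1 t x ht (hx S hS)).2
  · intro v w x y hvw hp S hS
    exact hS.2.2 v w x y hvw (EdgePath.mono (fun q hq => Set.mem_sInter.mp hq S hS) hp)

lemma step_lift {Sym : Type} {T : Set Sym} {P : Set (Sym × List Sym)}
    {u w : List Sym} {x y : Node Sym} (h : GStep P u w)
    (hp : EdgePath (dChase T P) x w y) : EdgePath (dChase T P) x u y := by
  obtain ⟨a, v, c, rhs, hvw, rfl, rfl⟩ := h
  rw [List.append_assoc] at hp
  obtain ⟨z₁, h1, hrest⟩ := EdgePath.append.mp hp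
  obtain ⟨z₂, h2, h3⟩ := EdgePath.append.mp hrest
  have hedge : Quad.edge z₁ v z₂ ∈ dChase T P :=
    (dChase_closed T P).2.2 v rhs z₁ z₂ hvw h2
  exact EdgePath.append.mpr ⟨z₁, h1, z₂, hedge, h3⟩

/-- Claim 2: if V_j ⇒* w and the dChase contains a path labeled w from b₁ to b_{p+1},
then the dChase contains the edge c:(b₁,V_j,b_{p+1}). -/
theorem stmt_7 {Sym : Type} (T : Set Sym) (P : Set (Sym × List Sym))
    (Vj : Sym) (w : List Sym) (b₁ b₂ : Node Sym)
    (hder : Derives P [Vj] w)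
    (hpath : EdgePath (dChase T P) b₁ w b₂) :
    Quad.edge b₁ Vj b₂ ∈ dChase T P := by
  have key : EdgePath (dChase T P) b₁ [Vj] b₂ := by
    induction hder with
    | refl => exact hpath
    | tail _ hstep ih => exact ih (step_lift hstep hpath)
  obtain ⟨z, hz, hz2⟩ := key
  cases hz2
  exact hz
end

section
/- With the grammar-encoding quad-system QS_c as above, the converse holds: if there exist constants b₁,…,b_{p+1} with c:(b_i, t_i, b_{i+1}) ∈ dChase(QS_c) for all i and c:(b₁, V_j, b_{p+1}) ∈ dChase(QS_c) where the edge labeled V_j was derived by rule applications, then V_j ⇒* t₁…t_p in the grammar. -/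
section Aux
variable {Sym : Type}

/-- Endpoint of the skolem path from `x` spelling `w`. -/
def endp (x : Node Sym) (w : List Sym) : Node Sym :=
  w.foldl (fun n t => Node.sk t n) x

def ndepth : Node Sym → Nat
  | Node.a => 0
  | Node.sk _ n => ndepth n + 1

lemma endp_append (x : Node Sym) (w₁ w₂ : List Sym) :
    endp x (w₁ ++ w₂) = endp (endp x w₁) w₂ := by
  simp [endp, List.foldl_append]

lemma ndepth_endp (x : Node Sym) (w : List Sym) :
    ndepth (endp x w) = ndepth x + w.length := by
  induction w generalizing x with
  | nil => simp [endp]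
  | cons t ls ih =>
    have : endp x (t :: ls) = endp (Node.sk t x) ls := rfl
    rw [this, ih]; simp [ndepth]; omega

lemma endp_inj (x : Node Sym) : ∀ w w' : List Sym, endp x w = endp x w' → w = w' := by
  intro w
  induction w using List.reverseRecOn with
  | nil =>
    intro w' h
    have hd := ndepth_endp x w'
    rw [← h] at hd
    simp [endp] at hd
    exact hd.symm
  | append_singleton ws t ih =>
    intro w' h
    rcases List.eq_nil_or_concat w' with rfl | ⟨ws', t', rfl⟩
    · have := ndepth_endp x (ws ++ [t])
      rw [h] at this
      simp [endp] at this
    · rw [List.concat_eq_append] at h ⊢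
      rw [endp_append, endp_append] at h
      simp only [endp, List.foldl] at h
      injection h with h1 h2
      rw [ih ws' h2, h1]

lemma gstep_context {P : Set (Sym × List Sym)} {u w : List Sym} (a b : List Sym)
    (h : GStep P u w) : GStep P (a ++ u ++ b) (a ++ w ++ b) := by
  rcases h with ⟨x, v, y, rhs, hp, rfl, rfl⟩
  exact ⟨a ++ x, v, y ++ b, rhs, hp, by simp, by simp⟩

lemma derives_context {P : Set (Sym × List Sym)} {u w : List Sym} (a b : List Sym)
    (h : Derives P u w) : Derives P (a ++ u ++ b) (a ++ w ++ b) := by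
  induction h with
  | refl => exact Relation.ReflTransGen.refl
  | tail _ hstep ih => exact ih.tail (gstep_context a b hstep)

lemma derives_append {P : Set (Sym × List Sym)} {u₁ w₁ u₂ w₂ : List Sym}
    (h₁ : Derives P u₁ w₁) (h₂ : Derives P u₂ w₂) :
    Derives P (u₁ ++ u₂) (w₁ ++ w₂) := by
  have a := derives_context (P := P) [] u₂ h₁
  have b := derives_context (P := P) w₁ [] h₂
  simp at a b
  exact a.trans b

lemma edgePath_mono {S S' : Set (Quad Sym)} (hss : S ⊆ S') :
    ∀ {x : Node Sym} {w : List Sym} {y : Node Sym}, EdgePath S x w y → EdgePath S' x w y := by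
  intro x w
  induction w generalizing x with
  | nil => intro y h; exact h
  | cons l ls ih =>
    intro y h
    rcases h with ⟨z, hz, hrest⟩
    exact ⟨z, hss hz, ih hrest⟩

lemma closed_dChase (T : Set Sym) (P : Set (Sym × List Sym)) :
    Closed T P (dChase T P) := by
  refine ⟨?_, ?_, ?_⟩
  · exact Set.mem_sInter.mpr fun S hS => hS.1
  · intro t x ht hx
    constructor
    · exact Set.mem_sInter.mpr fun S hS => (hS.2.1 t x ht (Set.mem_sInter.mp hx S hS)).1
    · exact Set.mem_sInter.mpr fun S hS => (hS.2.1 t x ht (Set.mem_sInter.mp hx S hS)).2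
  · intro v w x y hp hpath
    refine Set.mem_sInter.mpr fun S hS => ?_
    exact hS.2.2 v w x y hp (edgePath_mono (fun q hq => Set.mem_sInter.mp hq S hS) hpath)

/-- The semantic invariant for quads. -/
def QInv (T : Set Sym) (P : Set (Sym × List Sym)) : Quad Sym → Prop
  | Quad.edge x l y => ∃ w, (∀ t ∈ w, t ∈ T) ∧ Derives P [l] w ∧ y = endp x w
  | Quad.typC _ => True

def Good (T : Set Sym) (P : Set (Sym × List Sym)) : Set (Quad Sym) :=
  {q | q ∈ dChase T P ∧ QInv T P q}

lemma edgePath_good {T : Set Sym} {P : Set (Sym × List Sym)} :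
    ∀ {u : List Sym} {x y : Node Sym}, EdgePath (Good T P) x u y →
      ∃ w, (∀ t ∈ w, t ∈ T) ∧ Derives P u w ∧ y = endp x w := by
  intro u
  induction u with
  | nil =>
    intro x y h
    exact ⟨[], by simp, Relation.ReflTransGen.refl, h.symm⟩
  | cons l ls ih =>
    intro x y h
    rcases h with ⟨z, hz, hrest⟩
    rcases hz.2 with ⟨w₁, hw₁T, hder₁, rfl⟩
    rcases ih hrest with ⟨w₂, hw₂T, hder₂, rfl⟩
    refine ⟨w₁ ++ w₂, ?_, ?_, (endp_append x w₁ w₂).symm⟩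
    · intro t ht
      rcases List.mem_append.mp ht with h | h
      · exact hw₁T t h
      · exact hw₂T t h
    · exact derives_append (u₁ := [l]) hder₁ hder₂

lemma closed_good (T : Set Sym) (P : Set (Sym × List Sym)) :
    Closed T P (Good T P) := by
  have hd := closed_dChase T P
  refine ⟨⟨hd.1, trivial⟩, ?_, ?_⟩
  · intro t x ht hx
    refine ⟨⟨(hd.2.1 t x ht hx.1).1, ⟨[t], by simpa using ht,
      Relation.ReflTransGen.refl, rfl⟩⟩, ⟨(hd.2.1 t x ht hx.1).2, trivial⟩⟩
  · intro v rhs x y hp hpath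
    have hsub : Good T P ⊆ dChase T P := fun q hq => hq.1
    refine ⟨hd.2.2 v rhs x y hp (edgePath_mono hsub hpath), ?_⟩
    rcases edgePath_good hpath with ⟨w, hwT, hder, rfl⟩
    refine ⟨w, hwT, ?_, rfl⟩
    have hstep : GStep P [v] rhs := ⟨[], v, [], rhs, hp, by simp, by simp⟩
    exact (Relation.ReflTransGen.single hstep).trans hder

lemma dChase_subset_good (T : Set Sym) (P : Set (Sym × List Sym)) :
    dChase T P ⊆ Good T P :=
  fun q hq => Set.mem_sInter.mp hq (Good T P) (closed_good T P)

end Aux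

/-- Claim 3 (converse): if the dChase contains a path labeled by the terminal word
w = t₁…t_p from b₁ to b_{p+1} together with the edge c:(b₁,V_j,b_{p+1}) for a
grammar variable V_j, then V_j ⇒* w. -/
theorem stmt_8 {Sym : Type} (T Vars : Set Sym) (P : Set (Sym × List Sym))
    (hdisj : Disjoint T Vars)
    (hheads : ∀ p ∈ P, p.1 ∈ Vars)
    (hrhs : ∀ p ∈ P, ∀ s ∈ p.2, s ∈ Vars ∪ T)
    (Vj : Sym) (hVj : Vj ∈ Vars)
    (w : List Sym) (hw : ∀ t ∈ w, t ∈ T)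
    (b₁ b₂ : Node Sym)
    (hpath : EdgePath (dChase T P) b₁ w b₂)
    (hedge : Quad.edge b₁ Vj b₂ ∈ dChase T P) :
    Derives P [Vj] w := by
  -- A terminal symbol cannot be rewritten.
  have stuck : ∀ t ∈ T, ∀ u, Derives P [t] u → u = [t] := by
    intro t ht u hder
    rcases (Relation.ReflTransGen.cases_head hder) with rfl | ⟨m, hstep, _⟩
    · rfl
    · exfalso
      rcases hstep with ⟨x, v, y, rhs, hp, heq, _⟩
      have hv : v = t := by
        cases x with
        | nil =>
          simp at heq
          exact heq.1.symm
        | cons a xs => simp at heq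
      have : t ∈ Vars := hv ▸ hheads _ hp
      exact (hdisj.ne_of_mem ht this) rfl
  -- Every terminal-labeled path follows skolem edges.
  have pathend : ∀ (u : List Sym), (∀ t ∈ u, t ∈ T) → ∀ x y,
      EdgePath (dChase T P) x u y → y = endp x u := by
    intro u
    induction u with
    | nil => intro _ x y h; exact h.symm
    | cons t ls ih =>
      intro hu x y h
      rcases h with ⟨z, hz, hrest⟩
      rcases (dChase_subset_good T P hz).2 with ⟨w₁, _, hder₁, rfl⟩
      have hw₁ : w₁ = [t] := stuck t (hu t (by simp)) w₁ hder₁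
      subst hw₁
      have : endp x ([t] : List Sym) = Node.sk t x := rfl
      rw [ih (fun s hs => hu s (by simp [hs])) _ y hrest]
      rfl
  rcases (dChase_subset_good T P hedge).2 with ⟨w', hw'T, hder, hb₂⟩
  have hb₂' : b₂ = endp b₁ w := pathend w hw b₁ b₂ hpath
  have : w = w' := endp_inj b₁ w w' (hb₂'.symm.trans hb₂)
  exact this ▸ hder
end
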